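/- For every n ∈ ℕ with n ≥ 1, the normalization constant of ψ̂_{±n}(x) = e^{−x²/2} 𝓗_{±n}(x) is κ_n = κ_{−n} = π^{1/4} · 2^{n+1/2} · ((2n)!)^{1/2}; that is, ∫_ℝ e^{−x²} 𝓗_{±n}(x)² dx = √π · 2^{2n+1} · (2n)!, so that κ_n^{−1} ψ̂_{±n} has L²(ℝ)-norm equal to 1. -/

import Mathlib

/-- The physicists' Hermite polynomial, via the Rodrigues formula
`H n x = (-1)^n e^(x²) (dⁿ/dxⁿ) e^(-x²)`. -/
noncomputable def physHermite (n : ℕ) (x : ℝ) : ℝ :=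
    (-1 : ℝ) ^ n * Real.exp (x ^ 2) * iteratedDeriv n (fun y : ℝ => Real.exp (-y ^ 2)) x

/-- The supersymmetric Hermite polynomial `𝓗_{εn} = H_{2n} + ε 2√n H_{2n-1}` for `n ≥ 1`
(with sign `ε = ±1`), and `𝓗₀ = 1`. -/
noncomputable def ssHermite (ε : ℝ) (n : ℕ) (x : ℝ) : ℝ :=
    if n = 0 then 1
    else physHermite (2 * n) x + ε * (2 * Real.sqrt n) * physHermite (2 * n - 1) x

/-!
Via the Rodrigues formula, `H_n = (2x - d/dx)ⁿ 1`. The operator `2x - d/dx` is the adjoint of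
`d/dx` for the pairing `⟨p, q⟩ = ∫ p q e^{-x²}`, so `∫ q H_k e^{-x²} = ∫ q⁽ᵏ⁾ e^{-x²}`. Hence the
`H_k` are orthogonal with `∫ H_k² e^{-x²} = 2ᵏ k! √π`, and expanding the square of
`𝓗_{±n} = H_{2n} ± 2√n H_{2n-1}` gives `2^{2n} (2n)! √π + 4n · 2^{2n-1} (2n-1)! √π`.
-/

open Polynomial MeasureTheory Real Filter Topology Asymptotics

noncomputable def physHermitePoly : ℕ → ℝ[X]
  | 0 => 1
  | n + 1 => C 2 * X * physHermitePoly n - derivative (physHermitePoly n)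

theorem physHermitePoly_succ (n : ℕ) :
    physHermitePoly (n + 1) = C 2 * X * physHermitePoly n - derivative (physHermitePoly n) :=
  rfl

theorem derivative_physHermitePoly_succ (n : ℕ) :
    derivative (physHermitePoly (n + 1)) = C (2 * ((n : ℝ) + 1)) * physHermitePoly n := by
  induction n with
  | zero => simp [physHermitePoly]
  | succ n ih =>
    have hC : C (2 * (((n + 1 : ℕ) : ℝ) + 1)) = C (2 * ((n : ℝ) + 1)) + C 2 := by
      rw [← C_add]; push_cast; ring_nf
    rw [physHermitePoly_succ (n + 1), derivative_sub, derivative_mul, ih, physHermitePoly_succ n,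
      hC]
    simp only [derivative_mul, derivative_C, derivative_X, zero_mul, zero_add, mul_one]
    ring

theorem iterate_derivative_physHermitePoly_self (n : ℕ) :
    derivative^[n] (physHermitePoly n) = C ((2 : ℝ) ^ n * n.factorial) := by
  induction n with
  | zero => simp [physHermitePoly]
  | succ n ih =>
    rw [Function.iterate_succ_apply, derivative_physHermitePoly_succ, iterate_derivative_C_mul,
      ih, ← C_mul]
    push_cast [Nat.factorial_succ, pow_succ]
    ring_nf

theorem iterate_derivative_physHermitePoly_of_lt {m k : ℕ} (h : m < k) :
    derivative^[k] (physHermitePoly m) = 0 := by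
  rw [show k = (k - m) + m by omega, Function.iterate_add_apply,
    iterate_derivative_physHermitePoly_self, iterate_derivative_C (by omega)]

theorem tendsto_eval_mul_exp_neg_mul_sq_cocompact (p : ℝ[X]) {a : ℝ} (ha : 0 < a) :
    Tendsto (fun x => eval x p * exp (-a * x ^ 2)) (cocompact ℝ) (𝓝 0) := by
  induction p using Polynomial.induction_on' with
  | add p q hp hq => simpa [add_mul] using hp.add hq
  | monomial k c =>
    rw [tendsto_zero_iff_norm_tendsto_zero]
    simpa [abs_mul, mul_assoc] using
      (tendsto_rpow_abs_mul_exp_neg_mul_sq_cocompact ha k).const_mul |c|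

theorem integrable_eval_mul_exp_neg_sq (p : ℝ[X]) :
    Integrable fun x => eval x p * exp (-x ^ 2) := by
  set g : ℝ → ℝ := fun x => exp (-(1 / 2) * x ^ 2)
  have hsplit : (fun x => eval x p * exp (-x ^ 2)) = fun x => eval x p * g x * g x := by
    ext x; rw [mul_assoc, ← exp_add]; ring_nf
  have hbigO : (fun x => eval x p * g x * g x) =O[cocompact ℝ] g := by
    simpa only [one_mul] using
      ((tendsto_eval_mul_exp_neg_mul_sq_cocompact p one_half_pos).isBigO_one ℝ).mul
        (isBigO_refl g _)
  rw [hsplit]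
  exact (Continuous.locallyIntegrable (by fun_prop)).integrable_of_isBigO_cocompact hbigO
    ((integrable_exp_neg_mul_sq one_half_pos).integrableAtFilter _)

theorem hasDerivAt_eval_mul_exp_neg_sq (q : ℝ[X]) (x : ℝ) :
    HasDerivAt (fun y => eval y q * exp (-y ^ 2))
      (eval x (derivative q - C 2 * X * q) * exp (-x ^ 2)) x := by
  have hexp : HasDerivAt (fun y => exp (-y ^ 2)) (exp (-x ^ 2) * -(2 * x)) x := by
    simpa using (hasDerivAt_pow 2 x).neg.exp
  refine ((q.hasDerivAt x).fun_mul hexp).congr_deriv ?_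
  simp only [eval_sub, eval_mul, eval_C, eval_X]
  ring

theorem iterate_deriv_exp_neg_sq (n : ℕ) (x : ℝ) :
    deriv^[n] (fun y => exp (-y ^ 2)) x =
      (-1) ^ n * eval x (physHermitePoly n) * exp (-x ^ 2) := by
  induction n generalizing x with
  | zero => simp [physHermitePoly]
  | succ n ih =>
    rw [Function.iterate_succ_apply', funext ih]
    have h := ((hasDerivAt_eval_mul_exp_neg_sq (physHermitePoly n) x).const_mul ((-1) ^ n)).deriv
    simp only [← mul_assoc] at h
    rw [h, physHermitePoly_succ, pow_succ]
    simp only [eval_sub, eval_mul]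
    ring

theorem physHermite_eq_eval (n : ℕ) (x : ℝ) : physHermite n x = eval x (physHermitePoly n) := by
  rw [physHermite, iteratedDeriv_eq_iterate, iterate_deriv_exp_neg_sq]
  calc (-1) ^ n * exp (x ^ 2) * ((-1) ^ n * eval x (physHermitePoly n) * exp (-x ^ 2))
      = ((-1) ^ n * (-1) ^ n : ℝ) * (exp (x ^ 2) * exp (-x ^ 2)) * eval x (physHermitePoly n) := by
        ring
    _ = eval x (physHermitePoly n) := by
        rw [← mul_pow, ← exp_add]; norm_num

noncomputable def gaussWeightIntegral : ℝ[X] →ₗ[ℝ] ℝ where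
  toFun p := ∫ x, eval x p * exp (-x ^ 2)
  map_add' p q := by
    simp only [eval_add, add_mul]
    exact integral_add (integrable_eval_mul_exp_neg_sq p) (integrable_eval_mul_exp_neg_sq q)
  map_smul' c p := by
    simp only [eval_smul, smul_eq_mul, mul_assoc, integral_const_mul, RingHom.id_apply]

theorem gaussWeightIntegral_apply (p : ℝ[X]) :
    gaussWeightIntegral p = ∫ x, eval x p * exp (-x ^ 2) :=
  rfl

theorem gaussWeightIntegral_C (c : ℝ) : gaussWeightIntegral (C c) = c * √π := by
  simpa [gaussWeightIntegral_apply, integral_const_mul] using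
    congrArg (c * ·) (integral_gaussian 1)

theorem gaussWeightIntegral_derivative (p : ℝ[X]) :
    gaussWeightIntegral (derivative p) = gaussWeightIntegral (C 2 * X * p) := by
  have decay : Tendsto (fun x => eval x p * exp (-x ^ 2)) (cocompact ℝ) (𝓝 0) := by
    simpa using tendsto_eval_mul_exp_neg_mul_sq_cocompact p one_pos
  rw [← sub_eq_zero, ← map_sub, gaussWeightIntegral_apply]
  simpa using integral_of_hasDerivAt_of_tendsto (hasDerivAt_eval_mul_exp_neg_sq p)
    (integrable_eval_mul_exp_neg_sq _) (decay.mono_left atBot_le_cocompact)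
    (decay.mono_left atTop_le_cocompact)

theorem gaussWeightIntegral_mul_physHermitePoly_succ (q : ℝ[X]) (k : ℕ) :
    gaussWeightIntegral (q * physHermitePoly (k + 1)) =
      gaussWeightIntegral (derivative q * physHermitePoly k) := by
  have hsplit : q * physHermitePoly (k + 1) =
      (C 2 * X * (q * physHermitePoly k) - derivative (q * physHermitePoly k)) +
        derivative q * physHermitePoly k := by
    rw [physHermitePoly_succ, derivative_mul]; ring
  rw [hsplit, map_add, map_sub, gaussWeightIntegral_derivative, sub_self, zero_add]

theorem gaussWeightIntegral_mul_physHermitePoly (q : ℝ[X]) (k : ℕ) :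
    gaussWeightIntegral (q * physHermitePoly k) = gaussWeightIntegral (derivative^[k] q) := by
  induction k generalizing q with
  | zero => simp [physHermitePoly]
  | succ k ih =>
    rw [gaussWeightIntegral_mul_physHermitePoly_succ, ih, Function.iterate_succ_apply]

theorem gaussWeightIntegral_physHermitePoly_mul_self (k : ℕ) :
    gaussWeightIntegral (physHermitePoly k * physHermitePoly k) = 2 ^ k * k.factorial * √π := by
  rw [gaussWeightIntegral_mul_physHermitePoly, iterate_derivative_physHermitePoly_self,
    gaussWeightIntegral_C]

theorem gaussWeightIntegral_physHermitePoly_mul_of_lt {m k : ℕ} (h : m < k) :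
    gaussWeightIntegral (physHermitePoly m * physHermitePoly k) = 0 := by
  rw [gaussWeightIntegral_mul_physHermitePoly, iterate_derivative_physHermitePoly_of_lt h,
    map_zero]

theorem ssHermite_eq_eval {n : ℕ} (hn : n ≠ 0) (ε x : ℝ) :
    ssHermite ε n x = eval x
      (physHermitePoly (2 * n) + C (ε * (2 * √n)) * physHermitePoly (2 * n - 1)) := by
  simp [ssHermite, hn, physHermite_eq_eval]

theorem integral_exp_neg_sq_mul_ssHermite_sq {n : ℕ} (hn : n ≠ 0) {ε : ℝ} (hε : ε ^ 2 = 1) :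
    ∫ x, exp (-x ^ 2) * ssHermite ε n x ^ 2 = √π * 2 ^ (2 * n + 1) * (2 * n).factorial := by
  obtain ⟨m, rfl⟩ : ∃ m, n = m + 1 := Nat.exists_eq_succ_of_ne_zero hn
  set c := ε * (2 * √((m + 1 : ℕ) : ℝ))
  have hc : c ^ 2 = 4 * (m + 1) := by
    rw [mul_pow, mul_pow, hε, sq_sqrt (Nat.cast_nonneg _)]; push_cast; ring
  have hsq : (physHermitePoly (2 * m + 2) + C c * physHermitePoly (2 * m + 1)) ^ 2 =
      physHermitePoly (2 * m + 2) * physHermitePoly (2 * m + 2) +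
        (2 * c) • (physHermitePoly (2 * m + 1) * physHermitePoly (2 * m + 2)) +
        c ^ 2 • (physHermitePoly (2 * m + 1) * physHermitePoly (2 * m + 1)) := by
    simp only [← C_mul', C_mul, C_pow, C_ofNat]; ring
  calc ∫ x, exp (-x ^ 2) * ssHermite ε (m + 1) x ^ 2
      = gaussWeightIntegral
          ((physHermitePoly (2 * m + 2) + C c * physHermitePoly (2 * m + 1)) ^ 2) := by
        simp_rw [gaussWeightIntegral_apply, ssHermite_eq_eval hn, eval_pow, mul_comm (exp _)]
        rfl
    _ = 2 ^ (2 * m + 2) * (2 * m + 2).factorial * √π +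
          c ^ 2 * (2 ^ (2 * m + 1) * (2 * m + 1).factorial * √π) := by
        rw [hsq, map_add, map_add, map_smul, map_smul, gaussWeightIntegral_physHermitePoly_mul_self,
          gaussWeightIntegral_physHermitePoly_mul_self,
          gaussWeightIntegral_physHermitePoly_mul_of_lt (by omega), smul_zero, add_zero,
          smul_eq_mul]
    _ = √π * 2 ^ (2 * (m + 1) + 1) * (2 * (m + 1)).factorial := by
        rw [hc, show 2 * (m + 1) = 2 * m + 1 + 1 by ring, Nat.factorial_succ (2 * m + 1)]
        push_cast
        ring

theorem pi_rpow_mul_two_rpow_mul_sqrt_sq (n : ℕ) (a : ℝ) (ha : 0 ≤ a) :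
    (π ^ ((1 : ℝ) / 4) * 2 ^ ((n : ℝ) + 1 / 2) * √a) ^ 2 = √π * 2 ^ (2 * n + 1) * a := by
  have hπ : (π ^ ((1 : ℝ) / 4)) ^ 2 = √π := by
    rw [← rpow_natCast, ← rpow_mul pi_nonneg, sqrt_eq_rpow]; norm_num
  have h2 : ((2 : ℝ) ^ ((n : ℝ) + 1 / 2)) ^ 2 = 2 ^ (2 * n + 1) := by
    rw [← rpow_natCast, ← rpow_mul zero_le_two, ← rpow_natCast]; push_cast; ring_nf
  rw [mul_pow, mul_pow, hπ, h2, sq_sqrt ha]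

theorem integral_inv_mul_sq_eq_one {f : ℝ → ℝ} {κ : ℝ} (hκ : κ ≠ 0)
    (hf : ∫ x, f x ^ 2 = κ ^ 2) : ∫ x, (κ⁻¹ * f x) ^ 2 = 1 := by
  simp_rw [mul_pow, integral_const_mul, hf, inv_pow, inv_mul_cancel₀ (pow_ne_zero 2 hκ)]

/-- The normalization constant of `ψ̂_{εn}(x) = e^(-x²/2) 𝓗_{εn}(x)` is
`κₙ = π^(1/4) 2^(n+1/2) ((2n)!)^(1/2)`: one has
`∫ e^(-x²) 𝓗_{εn}(x)² dx = √π 2^(2n+1) (2n)!`, so `κₙ⁻¹ ψ̂_{εn}` has unit `L²` norm. -/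
theorem ssHermite_normalization (n : ℕ) (hn : 1 ≤ n) (ε : ℝ) (hε : ε = 1 ∨ ε = -1) :
    (∫ x : ℝ, Real.exp (-x ^ 2) * (ssHermite ε n x) ^ 2 =
      Real.sqrt Real.pi * 2 ^ (2 * n + 1) * (2 * n).factorial) ∧
    (∫ x : ℝ,
        ((Real.pi ^ ((1 : ℝ) / 4) * 2 ^ ((n : ℝ) + 1 / 2) *
            Real.sqrt ((2 * n).factorial))⁻¹ *
          (Real.exp (-x ^ 2 / 2) * ssHermite ε n x)) ^ 2 = 1) := by
  have hnorm := integral_exp_neg_sq_mul_ssHermite_sq (Nat.one_le_iff_ne_zero.mp hn)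
    (sq_eq_one_iff.mpr hε)
  refine ⟨hnorm, integral_inv_mul_sq_eq_one (by positivity) ?_⟩
  rw [pi_rpow_mul_two_rpow_mul_sqrt_sq n _ (Nat.cast_nonneg _), ← hnorm]
  congr 1 with x
  rw [mul_pow, ← exp_nat_mul]
  ring_nf
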